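/- arXiv:2409.03554 — 2 statements merged into one kernel-verified Lean document; each statement's English description precedes it below -/
import Mathlib

section
/- Let n ≥ 1, let Ω ⊆ ℝⁿ be a nonempty connected open set, let c ≥ 0, and let w : Ω → ℝ be a C³ function satisfying −Δ_{φₙ} w − w = 1 on Ω and |∇w(x)| = c for every x ∈ Ω. Then there exists a vector a ∈ ℝⁿ with |a| = c such that w(x) = ⟨a, x⟩ − 1 for all x ∈ Ω. In particular w is an affine function, so the zero set of w within Ω is contained in a hyperplane. -/
noncomputable section

open scoped BigOperators

/-- Euclidean space ℝⁿ. -/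
abbrev En (n : ℕ) := EuclideanSpace ℝ (Fin n)

/-- The (unweighted) divergence of a vector field on ℝⁿ: div Y = ∑ᵢ ∂ᵢYᵢ. -/
noncomputable def ediv {n : ℕ} (Y : En n → En n) (x : En n) : ℝ :=
  ∑ i, fderiv ℝ Y x (EuclideanSpace.single i 1) i

/-- The Laplacian Δf = div ∇f. -/
noncomputable def lap {n : ℕ} (f : En n → ℝ) (x : En n) : ℝ :=
  ediv (fun y => gradient f y) x

/-- Weighted Laplacian: Δ_φ u = Δu − ⟨∇φ, ∇u⟩. -/
noncomputable def lapW {n : ℕ} (φ : En n → ℝ) (f : En n → ℝ) (x : En n) : ℝ :=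
  lap f x - (inner ℝ (gradient φ x) (gradient f x) : ℝ)

/-- The Gaussian weight φₙ(x) = |x|²/2 + (n/2)·log(2π). -/
noncomputable def gaussW (n : ℕ) (x : En n) : ℝ :=
  ‖x‖ ^ 2 / 2 + (n / 2 : ℝ) * Real.log (2 * Real.pi)

/-! Write `g = ∇w` and `H = D²w`. Constancy of `|g|` gives `H g = 0`; differentiating this
identity and using the symmetry of `D³w` gives `∂_g H = -H²`. Differentiating the equation
`Δw = ⟨x, g⟩ - w - 1` in the direction `g` gives `∂_g Δw = ⟨x, H g⟩ = 0`, while the trace of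
`∂_g H` gives `∂_g Δw = -tr H² = -|H|²`. Hence `H = 0`, so `g` is constant on the connected set
`Ω`, `Δw = 0`, and the equation reads `w = ⟨g, x⟩ - 1`. -/

open InnerProductSpace Filter Topology
open scoped RealInnerProductSpace

section Hessian

variable {E : Type*} [NormedAddCommGroup E] [InnerProductSpace ℝ E] [CompleteSpace E]
  {f : E → ℝ} {s : Set E} {x : E}

theorem ContDiffAt.contDiffAt_gradient {k : ℕ} (hf : ContDiffAt ℝ (k + 1) f x) :
    ContDiffAt ℝ k (gradient f) x :=
  (toDual ℝ E).symm.contDiff.contDiffAt.comp x (hf.fderiv_right le_rfl)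

theorem inner_fderiv_gradient_apply (v z : E) :
    ⟪fderiv ℝ (gradient f) x v, z⟫ = fderiv ℝ (fderiv ℝ f) x v z := by
  change ⟪fderiv ℝ ((toDual ℝ E).symm ∘ fderiv ℝ f) x v, z⟫ = _
  rw [LinearIsometryEquiv.comp_fderiv]
  exact toDual_symm_apply

theorem ContDiffAt.isSymmetric_fderiv_gradient (hf : ContDiffAt ℝ 2 f x) :
    (fderiv ℝ (gradient f) x : E →ₗ[ℝ] E).IsSymmetric := fun v z => by
  rw [ContinuousLinearMap.coe_coe, ← real_inner_comm v, inner_fderiv_gradient_apply,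
    inner_fderiv_gradient_apply, hf.isSymmSndFDerivAt (by simp)]

theorem fderiv_gradient_apply_gradient_eq_zero {c : ℝ} (hf : ContDiffAt ℝ 2 f x)
    (hc : ∀ᶠ y in 𝓝 x, ‖gradient f y‖ = c) :
    fderiv ℝ (gradient f) x (gradient f x) = 0 := by
  have hnorm :=
    (hf.contDiffAt_gradient (k := 1)).differentiableAt one_ne_zero |>.hasFDerivAt.norm_sq
  have hconst : HasFDerivAt (‖gradient f ·‖ ^ 2) (0 : E →L[ℝ] ℝ) x :=
    (hasFDerivAt_const (c ^ 2) x).congr_of_eventuallyEq (hc.mono fun y hy => by simp only [hy])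
  have horth : ∀ v, ⟪gradient f x, fderiv ℝ (gradient f) x v⟫ = 0 := fun v => by
    simpa using congrArg (· v) (hnorm.unique hconst)
  rw [← inner_self_eq_zero (𝕜 := ℝ)]
  exact (hf.isSymmetric_fderiv_gradient _ _).trans (horth _)

theorem fderiv_fderiv_gradient_gradient_apply {c : ℝ} (hs : IsOpen s) (hf : ContDiffOn ℝ 3 f s)
    (hc : ∀ y ∈ s, ‖gradient f y‖ = c) (hx : x ∈ s) (v : E) :
    fderiv ℝ (fderiv ℝ (gradient f)) x (gradient f x) v =
      -fderiv ℝ (gradient f) x (fderiv ℝ (gradient f) x v) := by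
  have hf₃ : ∀ y ∈ s, ContDiffAt ℝ 3 f y := fun y hy => hf.contDiffAt (hs.mem_nhds hy)
  have hg : ContDiffAt ℝ 2 (gradient f) x := (hf₃ x hx).contDiffAt_gradient
  have hHess : DifferentiableAt ℝ (fderiv ℝ (gradient f)) x :=
    (hg.fderiv_right (m := 1) le_rfl).differentiableAt one_ne_zero
  have hzero : (fun y => fderiv ℝ (gradient f) y (gradient f y)) =ᶠ[𝓝 x] fun _ => 0 := by
    filter_upwards [hs.mem_nhds hx] with y hy
    exact fderiv_gradient_apply_gradient_eq_zero ((hf₃ y hy).of_le (by norm_num))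
      (eventually_of_mem (hs.mem_nhds hy) hc)
  -- differentiate the identity `D²f(y) ∇f(y) = 0`
  have hderiv := (hHess.hasFDerivAt.clm_apply (hg.differentiableAt two_ne_zero).hasFDerivAt)
    |>.congr_of_eventuallyEq hzero.symm |>.unique (hasFDerivAt_const 0 x)
  have := congrArg (· v) hderiv
  simp only [add_apply, ContinuousLinearMap.coe_comp, Function.comp_apply,
    ContinuousLinearMap.flip_apply, zero_apply] at this
  rw [hg.isSymmSndFDerivAt (by simp) (gradient f x) v]
  exact eq_neg_of_add_eq_zero_right this

end Hessian

theorem OrthonormalBasis.eq_zero_of_sum_inner_apply_apply {ι E : Type*} [Fintype ι]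
    [NormedAddCommGroup E] [InnerProductSpace ℝ E] (b : OrthonormalBasis ι ℝ E) {A : E →L[ℝ] E}
    (hA : (A : E →ₗ[ℝ] E).IsSymmetric) (h : ∑ i, ⟪A (A (b i)), b i⟫ = 0) : A = 0 := by
  have hsq : ∑ i, ‖A (b i)‖ ^ 2 = 0 := by
    rw [← h]
    refine Finset.sum_congr rfl fun i _ => ?_
    rw [← real_inner_self_eq_norm_sq]
    exact (hA _ _).symm
  have hb : ∀ i, A (b i) = 0 := fun i => by
    simpa using (Finset.sum_eq_zero_iff_of_nonneg (fun j _ => sq_nonneg ‖A (b j)‖)).1 hsq i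
  exact ContinuousLinearMap.coe_injective (b.toBasis.ext fun i => by simpa using hb i)

section GaussianLaplacian

variable {n : ℕ}

theorem hasGradientAt_gaussW (x : En n) : HasGradientAt (gaussW n) x x := by
  rw [hasGradientAt_iff_hasFDerivAt]
  have hfun : gaussW n = fun y =>
      ‖id y‖ ^ 2 * (1 / 2) + (n / 2 : ℝ) * Real.log (2 * Real.pi) := by
    funext y
    simp only [gaussW, id]
    ring
  rw [hfun]
  refine (((hasFDerivAt_id x).norm_sq.mul_const (1 / 2 : ℝ)).add_const _).congr_fderiv ?_
  ext v
  simp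

theorem gradient_gaussW (x : En n) : gradient (gaussW n) x = x :=
  (hasGradientAt_gaussW x).gradient

theorem fderiv_ediv_apply {Y : En n → En n} {x : En n}
    (hY : DifferentiableAt ℝ (fderiv ℝ Y) x) (u : En n) :
    fderiv ℝ (ediv Y) x u = ∑ i, fderiv ℝ (fderiv ℝ Y) x u (EuclideanSpace.single i 1) i := by
  let L : Fin n → (En n →L[ℝ] En n) →L[ℝ] ℝ := fun i =>
    (EuclideanSpace.proj i).comp (ContinuousLinearMap.apply ℝ (En n) (EuclideanSpace.single i 1))
  have h : HasFDerivAt (ediv Y) (∑ i, (L i).comp (fderiv ℝ (fderiv ℝ Y) x)) x :=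
    HasFDerivAt.fun_sum fun i _ => (L i).hasFDerivAt.comp x hY.hasFDerivAt
  simp [h.fderiv, L]

variable {Ω : Set (En n)} {w : En n → ℝ} {x : En n}

theorem fderiv_lap_apply_of_gaussian_pde (hΩ : IsOpen Ω) (hw : ContDiffOn ℝ 3 w Ω)
    (hpde : ∀ y ∈ Ω, -lapW (gaussW n) w y - w y = 1) (hx : x ∈ Ω) (u : En n) :
    fderiv ℝ (lap w) x u = ⟪x, fderiv ℝ (gradient w) x u⟫ := by
  have hw₃ : ContDiffAt ℝ 3 w x := hw.contDiffAt (hΩ.mem_nhds hx)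
  have hg : ContDiffAt ℝ 2 (gradient w) x := hw₃.contDiffAt_gradient
  have hlap : lap w =ᶠ[𝓝 x] fun y => ⟪y, gradient w y⟫ - w y - 1 := by
    filter_upwards [hΩ.mem_nhds hx] with y hy
    have := hpde y hy
    rw [lapW, gradient_gaussW] at this
    linarith
  have hrhs : HasFDerivAt (fun y => ⟪y, gradient w y⟫ - w y - 1) _ x :=
    (((hasFDerivAt_id x).inner ℝ (hg.differentiableAt two_ne_zero).hasFDerivAt).sub
      (hw₃.differentiableAt (by norm_num)).hasFDerivAt).sub_const 1
  rw [hlap.fderiv_eq, hrhs.fderiv]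
  simp

theorem fderiv_gradient_eq_zero_of_gaussian_pde {c : ℝ} (hΩ : IsOpen Ω) (hw : ContDiffOn ℝ 3 w Ω)
    (hpde : ∀ y ∈ Ω, -lapW (gaussW n) w y - w y = 1) (hgrad : ∀ y ∈ Ω, ‖gradient w y‖ = c)
    (hx : x ∈ Ω) : fderiv ℝ (gradient w) x = 0 := by
  have hw₃ : ContDiffAt ℝ 3 w x := hw.contDiffAt (hΩ.mem_nhds hx)
  have hw₂ : ContDiffAt ℝ 2 w x := hw₃.of_le (by norm_num)
  have hHess : DifferentiableAt ℝ (fderiv ℝ (gradient w)) x :=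
    (hw₃.contDiffAt_gradient.fderiv_right (m := 1) le_rfl).differentiableAt one_ne_zero
  refine (EuclideanSpace.basisFun (Fin n) ℝ).eq_zero_of_sum_inner_apply_apply
    hw₂.isSymmetric_fderiv_gradient ?_
  have h := fderiv_lap_apply_of_gaussian_pde hΩ hw hpde hx (gradient w x)
  rw [fderiv_gradient_apply_gradient_eq_zero hw₂ (eventually_of_mem (hΩ.mem_nhds hx) hgrad),
    inner_zero_right] at h
  change fderiv ℝ (ediv (gradient w)) x _ = 0 at h
  rw [fderiv_ediv_apply hHess] at h
  simpa [fderiv_fderiv_gradient_gradient_apply hΩ hw hgrad hx, EuclideanSpace.inner_single_right]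
    using h

end GaussianLaplacian

theorem stmt7_general (n : ℕ) (Ω : Set (En n)) (hΩ : IsOpen Ω)
    (hconn : IsConnected Ω) (c : ℝ)
    (w : En n → ℝ) (hw : ContDiffOn ℝ 3 w Ω)
    (hpde : ∀ x ∈ Ω, -lapW (gaussW n) w x - w x = 1)
    (hgrad : ∀ x ∈ Ω, ‖gradient w x‖ = c) :
    ∃ a : En n, ‖a‖ = c ∧ ∀ x ∈ Ω, w x = (inner ℝ a x : ℝ) - 1 := by
  obtain ⟨x₀, hx₀⟩ := hconn.nonempty
  have hHess : ∀ x ∈ Ω, fderiv ℝ (gradient w) x = 0 := fun x hx =>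
    fderiv_gradient_eq_zero_of_gaussian_pde hΩ hw hpde hgrad hx
  have hgradC : ∀ x ∈ Ω, gradient w x = gradient w x₀ := fun x hx =>
    hΩ.is_const_of_fderiv_eq_zero hconn.isPreconnected
      (fun y hy => ((hw.contDiffAt (hΩ.mem_nhds hy)).contDiffAt_gradient (k := 2)
        |>.differentiableAt two_ne_zero).differentiableWithinAt) hHess hx hx₀
  refine ⟨gradient w x₀, hgrad x₀ hx₀, fun x hx => ?_⟩
  have hlap : lap w x = 0 := by simp [lap, ediv, hHess x hx]
  have := hpde x hx
  rw [lapW, hlap, gradient_gaussW, hgradC x hx, real_inner_comm] at this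
  linarith

/-- if `w` is a C³ solution of −Δ_{φₙ}w − w = 1 on a nonempty connected
open set Ω with |∇w| ≡ c on Ω, then w(x) = ⟨a,x⟩ − 1 for some vector a with |a| = c;
in particular w is affine. -/
theorem stmt7 (n : ℕ) (hn : 1 ≤ n) (Ω : Set (En n)) (hΩ : IsOpen Ω)
    (hne : Ω.Nonempty) (hconn : IsConnected Ω) (c : ℝ) (hc : 0 ≤ c)
    (w : En n → ℝ) (hw : ContDiffOn ℝ 3 w Ω)
    (hpde : ∀ x ∈ Ω, -lapW (gaussW n) w x - w x = 1)
    (hgrad : ∀ x ∈ Ω, ‖gradient w x‖ = c) :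
    ∃ a : En n, ‖a‖ = c ∧ ∀ x ∈ Ω, w x = (inner ℝ a x : ℝ) - 1 :=
  stmt7_general n Ω hΩ hconn c w hw hpde hgrad
end
end

section
/- Let n ≥ 1, let φ : ℝⁿ → ℝ be smooth, let f : ℝⁿ → ℝ be C¹ with compact support and let h : ℝⁿ → ℝ be C². Then the weighted integration-by-parts formula holds: ∫_{ℝⁿ} f(x)·(Δ_φ h)(x)·e^{−φ(x)} dx + ∫_{ℝⁿ} ⟨∇f(x), ∇h(x)⟩·e^{−φ(x)} dx = 0, where dx is Lebesgue measure. -/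
noncomputable section

open scoped BigOperators
open MeasureTheory InnerProductSpace

open MeasureTheory InnerProductSpace in
lemma grad_inner {n : ℕ} (u : En n → ℝ) (x v : En n) :
    (inner ℝ (gradient u x) v : ℝ) = fderiv ℝ u x v := by
  simp [gradient, InnerProductSpace.toDual_symm_apply]

lemma grad_apply {n : ℕ} (u : En n → ℝ) (x : En n) (i : Fin n) :
    gradient u x i = fderiv ℝ u x (EuclideanSpace.single i 1) := by
  rw [← grad_inner, EuclideanSpace.inner_single_right]
  simp

lemma fderiv_cs_integrable {n : ℕ} {w : En n → ℝ} (hw : ContDiff ℝ 1 w)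
    (hsupp : HasCompactSupport w) (v : En n) :
    Integrable (fun x : En n => fderiv ℝ w x v) volume := by
  apply Continuous.integrable_of_hasCompactSupport
  · exact (hw.continuous_fderiv one_ne_zero).clm_apply continuous_const
  · exact hsupp.fderiv_apply ℝ v

lemma integral_fderiv_cs {n : ℕ} {w : En n → ℝ} (hw : ContDiff ℝ 1 w)
    (hsupp : HasCompactSupport w) (v : En n) :
    ∫ x : En n, fderiv ℝ w x v = 0 := by
  have h1 : Integrable (fun x : En n => fderiv ℝ w x v * (fun _ : En n => (1:ℝ)) x) volume := by
    simpa using fderiv_cs_integrable hw hsupp v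
  have h2 : Integrable (fun x : En n => w x * fderiv ℝ (fun _ : En n => (1:ℝ)) x v) volume := by
    simp [fderiv_fun_const]
  have h3 : Integrable (fun x : En n => w x * (fun _ : En n => (1:ℝ)) x) volume := by
    simpa using hw.continuous.integrable_of_hasCompactSupport hsupp
  have := integral_mul_fderiv_eq_neg_fderiv_mul_of_integrable h1 h2 h3
    (fun x _ => hw.differentiable one_ne_zero x) (fun x _ => differentiableAt_const _)
  simp only [fderiv_fun_const, Pi.zero_apply, ContinuousLinearMap.zero_apply, mul_zero, mul_one,
    integral_zero] at this
  linarith [this]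

lemma grad_contDiff {n : ℕ} {h : En n → ℝ} (hh : ContDiff ℝ 2 h) :
    ContDiff ℝ 1 (gradient h) :=
  ((toDual ℝ (En n)).symm.contDiff).comp (hh.fderiv_right (by norm_num))

lemma inner_eq_sum {n : ℕ} (u v : En n → ℝ) (hu : ContDiff ℝ 1 u) (x : En n) :
    (inner ℝ (gradient u x) (gradient v x) : ℝ)
      = ∑ i, fderiv ℝ u x (EuclideanSpace.single i 1) * gradient v x i := by
  rw [PiLp.inner_apply]
  refine Finset.sum_congr rfl fun i _ => ?_
  simp [grad_apply u x i, mul_comm]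

lemma pointwise {n : ℕ} (φ f h : En n → ℝ) (hφ : ContDiff ℝ (⊤ : ℕ∞) φ) (hf : ContDiff ℝ 1 f)
    (hh : ContDiff ℝ 2 h) (x : En n) :
    f x * lapW φ h x * Real.exp (-φ x)
        + (inner ℝ (gradient f x) (gradient h x) : ℝ) * Real.exp (-φ x)
      = ∑ i, fderiv ℝ (fun y => f y * Real.exp (-φ y) * gradient h y i) x
          (EuclideanSpace.single i 1) := by
  have hG := grad_contDiff hh
  have hfx := (hf.differentiable one_ne_zero x).hasFDerivAt
  have hφx := (hφ.differentiable (by simp) x).hasFDerivAt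
  have hρx : HasFDerivAt (fun y => Real.exp (-φ y)) (Real.exp (-φ x) • (-fderiv ℝ φ x)) x :=
    (Real.hasDerivAt_exp (-φ x)).comp_hasFDerivAt (f := fun y => -φ y) x hφx.neg
  have hGx := (hG.differentiable one_ne_zero x).hasFDerivAt
  have hgi : ∀ i : Fin n, HasFDerivAt (fun y => gradient h y i)
      ((EuclideanSpace.proj i).comp (fderiv ℝ (gradient h) x)) x :=
    fun i => (EuclideanSpace.proj (𝕜 := ℝ) i).hasFDerivAt.comp x hGx
  have key : ∀ i ∈ Finset.univ, fderiv ℝ (fun y => f y * Real.exp (-φ y) * gradient h y i) x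
        (EuclideanSpace.single i 1)
      = (fderiv ℝ f x (EuclideanSpace.single i 1) * gradient h x i) * Real.exp (-φ x)
        - (fderiv ℝ φ x (EuclideanSpace.single i 1) * gradient h x i) * (f x * Real.exp (-φ x))
        + (fderiv ℝ (gradient h) x (EuclideanSpace.single i 1) i) * (f x * Real.exp (-φ x)) := by
    intro i _
    have hp : ∀ v : En n, (EuclideanSpace.proj (𝕜 := ℝ) i) v = v i := fun _ => rfl
    rw [((hfx.fun_mul hρx).fun_mul (hgi i)).fderiv]
    simp only [ContinuousLinearMap.add_apply, ContinuousLinearMap.smul_apply,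
      ContinuousLinearMap.comp_apply, ContinuousLinearMap.coe_smul', Pi.smul_apply,
      ContinuousLinearMap.neg_apply, smul_eq_mul, hp]
    ring
  rw [Finset.sum_congr rfl key, Finset.sum_add_distrib, Finset.sum_sub_distrib,
    ← Finset.sum_mul, ← Finset.sum_mul, ← Finset.sum_mul, lapW, lap, ediv,
    inner_eq_sum φ h (hφ.of_le (by simp)), inner_eq_sum f h hf,
    show (fun y => gradient h y) = gradient h from rfl]
  ring

/-- weighted integration by parts, with `f` C¹ compactly supported and
`h` C²: ∫ f·(Δ_φ h)·e^{−φ} dx + ∫ ⟨∇f, ∇h⟩·e^{−φ} dx = 0. -/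
theorem stmt9 (n : ℕ) (hn : 1 ≤ n) (φ : En n → ℝ) (hφ : ContDiff ℝ (⊤ : ℕ∞) φ)
    (f : En n → ℝ) (hf : ContDiff ℝ 1 f) (hfsupp : HasCompactSupport f)
    (h : En n → ℝ) (hh : ContDiff ℝ 2 h) :
    (∫ x : En n, f x * lapW φ h x * Real.exp (-φ x))
      + (∫ x : En n, (inner ℝ (gradient f x) (gradient h x) : ℝ) * Real.exp (-φ x)) = 0 := by
  have hG := grad_contDiff hh
  have hρ : ContDiff ℝ 1 (fun y : En n => Real.exp (-φ y)) :=
    Real.contDiff_exp.comp (hφ.of_le (by simp)).neg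
  have hw : ∀ i : Fin n, ContDiff ℝ 1 (fun y => f y * Real.exp (-φ y) * gradient h y i) :=
    fun i => (hf.mul hρ).mul ((EuclideanSpace.proj (𝕜 := ℝ) i).contDiff.comp hG)
  have hwsupp : ∀ i : Fin n,
      HasCompactSupport (fun y => f y * Real.exp (-φ y) * gradient h y i) :=
    fun i => hfsupp.mul_right.mul_right
  -- continuity of the two integrands
  have hgradf_cont : Continuous (gradient f) :=
    ((toDual ℝ (En n)).symm.continuous).comp (hf.continuous_fderiv one_ne_zero)
  have hlap_cont : Continuous (fun x => lapW φ h x) := by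
    apply Continuous.sub
    · have hrfl : lap h = fun x => ∑ i : Fin n, (EuclideanSpace.proj (𝕜 := ℝ) i)
          ((fderiv ℝ (gradient h) x) (EuclideanSpace.single i 1)) := rfl
      rw [hrfl]
      exact continuous_finset_sum _ fun i _ =>
        ((EuclideanSpace.proj (𝕜 := ℝ) i).continuous.comp
          ((hG.continuous_fderiv one_ne_zero).clm_apply continuous_const) : _)
    · exact ((grad_contDiff (hφ.of_le (WithTop.coe_le_coe.mpr (le_top : (2 : ℕ∞) ≤ ⊤)))).continuous).inner hG.continuous
  have hAc : Continuous (fun x => f x * lapW φ h x * Real.exp (-φ x)) :=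
    (hf.continuous.mul hlap_cont).mul hρ.continuous
  have hBc : Continuous (fun x => (inner ℝ (gradient f x) (gradient h x) : ℝ) * Real.exp (-φ x)) :=
    (hgradf_cont.inner hG.continuous).mul hρ.continuous
  have hAsupp : HasCompactSupport (fun x => f x * lapW φ h x * Real.exp (-φ x)) :=
    hfsupp.mul_right.mul_right
  have hgfsupp : HasCompactSupport (gradient f) :=
    (hfsupp.fderiv ℝ).comp_left (by simp)
  have hBsupp : HasCompactSupport
      (fun x => (inner ℝ (gradient f x) (gradient h x) : ℝ) * Real.exp (-φ x)) := by
    apply hgfsupp.mono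
    intro x hx
    simp only [Function.mem_support, ne_eq] at hx ⊢
    intro hgx
    exact hx (by simp [hgx])
  have hAint : MeasureTheory.Integrable (fun x => f x * lapW φ h x * Real.exp (-φ x)) :=
    hAc.integrable_of_hasCompactSupport hAsupp
  have hBint : MeasureTheory.Integrable
      (fun x => (inner ℝ (gradient f x) (gradient h x) : ℝ) * Real.exp (-φ x)) :=
    hBc.integrable_of_hasCompactSupport hBsupp
  rw [← MeasureTheory.integral_add hAint hBint]
  have hpt : ∀ x : En n, f x * lapW φ h x * Real.exp (-φ x)
        + (inner ℝ (gradient f x) (gradient h x) : ℝ) * Real.exp (-φ x)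
      = ∑ i, fderiv ℝ (fun y => f y * Real.exp (-φ y) * gradient h y i) x
          (EuclideanSpace.single i 1) :=
    pointwise φ f h hφ hf hh
  calc (∫ x : En n, (f x * lapW φ h x * Real.exp (-φ x)
          + (inner ℝ (gradient f x) (gradient h x) : ℝ) * Real.exp (-φ x)))
      = ∫ x : En n, ∑ i, fderiv ℝ (fun y => f y * Real.exp (-φ y) * gradient h y i) x
          (EuclideanSpace.single i 1) := by
        exact MeasureTheory.integral_congr_ae (Filter.Eventually.of_forall hpt)
    _ = ∑ i, ∫ x : En n, fderiv ℝ (fun y => f y * Real.exp (-φ y) * gradient h y i) x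
          (EuclideanSpace.single i 1) :=
        MeasureTheory.integral_finset_sum _ fun i _ => fderiv_cs_integrable (hw i) (hwsupp i) _
    _ = 0 := Finset.sum_eq_zero fun i _ => integral_fderiv_cs (hw i) (hwsupp i) _
end
end
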